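/- In the free k-module with basis the reduced planar trees, the bracket [t,u] := t ↷σ u − u ↷σ t satisfies the Jacobi identity [[t,u],v] + [[v,t],u] + [[u,v],t] = 0 for all reduced planar trees t, u, v; hence it defines a Lie algebra structure on the linear span of reduced planar trees. -/
import Mathlib


/-- Reduced planar trees: the leaf `|`, or `∨(t1,…,tn)` with `n ≥ 2`; the internal
vertex `∨(t1,t2,…,tn)` is encoded as `node t1 t2 [t3,…,tn]`, so that the list of
branches automatically has length at least `2`. -/
inductive R : Type
  | leaf : R
  | node : R → R → List R → R

mutual
/-- List of all graftings of `t` at the successive leaves (left to right) of a tree. -/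
def graftings (t : R) : R → List R
  | .leaf => [t]
  | .node t1 t2 rest =>
      (graftings t t1).map (fun t1' => R.node t1' t2 rest) ++
      (graftings t t2).map (fun t2' => R.node t1 t2' rest) ++
      (graftingsL t rest).map (fun rest' => R.node t1 t2 rest')

/-- All ways to graft `t` at one leaf of one of the trees of a list of trees. -/
def graftingsL (t : R) : List R → List (List R)
  | [] => []
  | u :: us =>
      (graftings t u).map (fun u' => u' :: us) ++
      (graftingsL t us).map (fun us' => u :: us')
end

variable {k : Type*} [CommRing k]

/-- The grafting product on basis elements: `t ↷σ u` is the sum of all graftings of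
`t` at the leaves of `u`, in the free `k`-module with basis the reduced planar trees. -/
noncomputable def bp (t u : R) : R →₀ k :=
  ((graftings t u).map (fun v => Finsupp.single v (1 : k))).sum

/-- The bilinear extension of the grafting product `↷σ` to the free `k`-module with
basis the reduced planar trees. -/
noncomputable def graftMul (x y : R →₀ k) : R →₀ k :=
  x.sum fun t a => y.sum fun u b => (a * b) • bp t u

/-- The embedding of a reduced planar tree as a basis element of the free module. -/
noncomputable def e (t : R) : R →₀ k := Finsupp.single t 1

/-- The bracket `[x,y] := x ↷σ y − y ↷σ x`. -/
noncomputable def bracket (x y : R →₀ k) : R →₀ k := graftMul x y - graftMul y x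

namespace RJaux

/- generic list-sum lemmas -/
lemma listSum_zero {α M : Type*} [AddCommMonoid M] (l : List α) :
    (l.map fun _ => (0 : M)).sum = 0 := by
  induction l <;> simp [*]

lemma listSum_add {α M : Type*} [AddCommMonoid M] (l : List α) (f g : α → M) :
    (l.map fun x => f x + g x).sum = (l.map f).sum + (l.map g).sum := by
  induction l with
  | nil => simp
  | cons a l ih => simp only [List.map_cons, List.sum_cons, ih]; abel

lemma listSum_comm {α β M : Type*} [AddCommMonoid M] (l1 : List α) (l2 : List β)
    (f : α → β → M) :
    (l1.map fun a => (l2.map fun b => f a b).sum).sum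
      = (l2.map fun b => (l1.map fun a => f a b).sum).sum := by
  induction l1 with
  | nil => simp [listSum_zero]
  | cons a l ih => simp only [List.map_cons, List.sum_cons, ih, listSum_add]

/- mapDomain as an AddMonoidHom -/
noncomputable def md {α β : Type*} (f : α → β) : (α →₀ k) →+ (β →₀ k) :=
  AddMonoidHom.mk' (Finsupp.mapDomain f) fun _ _ => Finsupp.mapDomain_add

@[simp] lemma md_single {α β : Type*} (f : α → β) (a : α) (c : k) :
    md f (Finsupp.single a c) = Finsupp.single (f a) c := Finsupp.mapDomain_single

lemma md_listSum {α β γ : Type*} (f : α → β) (l : List γ) (g : γ → α →₀ k) :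
    md f ((l.map g).sum) = (l.map fun x => md f (g x)).sum := by
  rw [map_list_sum, List.map_map]; rfl

/- the basic sums -/
noncomputable def bpL (t : R) (us : List R) : List R →₀ k :=
  ((graftingsL t us).map (fun l => Finsupp.single l (1 : k))).sum

noncomputable def bp1 (t u v : R) : R →₀ k := ((graftings t u).map (fun w => bp w v)).sum

noncomputable def bp2 (t u v : R) : R →₀ k := ((graftings u v).map (fun w => bp t w)).sum

noncomputable def bp1L (t u : R) (us : List R) : List R →₀ k :=
  ((graftings t u).map (fun w => bpL w us)).sum

noncomputable def bp2L (t u : R) (us : List R) : List R →₀ k :=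
  ((graftingsL u us).map (fun l => bpL t l)).sum

lemma md_bp {β : Type*} (f : R → β) (t x : R) :
    md f (bp t x : R →₀ k) = ((graftings t x).map fun y => Finsupp.single (f y) (1 : k)).sum := by
  rw [bp, md_listSum]; simp

lemma md_bpL {β : Type*} (f : List R → β) (t : R) (l : List R) :
    md f (bpL t l : List R →₀ k)
      = ((graftingsL t l).map fun m => Finsupp.single (f m) (1 : k)).sum := by
  rw [bpL, md_listSum]; simp

lemma bp_leaf (t : R) : bp t R.leaf = (Finsupp.single t 1 : R →₀ k) := by
  simp [bp, graftings]

lemma bpL_nil (t : R) : bpL t [] = (0 : List R →₀ k) := by simp [bpL, graftingsL]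

lemma bp_node (t a b : R) (rest : List R) :
    bp t (R.node a b rest)
      = md (fun x => R.node x b rest) (bp t a : R →₀ k)
        + md (fun z => R.node a z rest) (bp t b)
        + md (fun l => R.node a b l) (bpL t rest) := by
  rw [md_bp, md_bp, md_bpL]
  simp [bp, graftings, List.map_map, Function.comp_def]
  abel

lemma bpL_cons (t x : R) (ws : List R) :
    bpL t (x :: ws)
      = md (fun y => y :: ws) (bp t x : R →₀ k) + md (fun l => x :: l) (bpL t ws) := by
  rw [md_bp, md_bpL]
  simp [bpL, graftingsL, List.map_map, Function.comp_def]

/- leaf / nil cases -/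
lemma bp2_leaf (t u : R) : bp2 t u R.leaf = (bp t u : R →₀ k) := by
  simp [bp2, graftings, bp]

lemma bp1_leaf (t u : R) : bp1 t u R.leaf = (bp t u : R →₀ k) := by
  simp [bp1, bp, graftings]

lemma bp1L_nil (t u : R) : bp1L t u [] = (0 : List R →₀ k) := by
  simp [bp1L, bpL_nil, listSum_zero]

lemma bp2L_nil (t u : R) : bp2L t u [] = (0 : List R →₀ k) := by
  simp [bp2L, graftingsL]

/- node / cons expansions -/
lemma bp1_node (t u a b : R) (rest : List R) :
    bp1 t u (R.node a b rest)
      = md (fun x => R.node x b rest) (bp1 t u a : R →₀ k)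
        + md (fun z => R.node a z rest) (bp1 t u b)
        + md (fun l => R.node a b l) (bp1L t u rest) := by
  simp only [bp1, bp1L, bp_node, listSum_add, md_listSum]

lemma bp1L_cons (t u w : R) (ws : List R) :
    bp1L t u (w :: ws)
      = md (fun y => y :: ws) (bp1 t u w : R →₀ k) + md (fun l => w :: l) (bp1L t u ws) := by
  simp only [bp1L, bp1, bpL_cons, listSum_add, md_listSum]

lemma bp2_node (t u a b : R) (rest : List R) :
    bp2 t u (R.node a b rest)
      = md (fun x => R.node x b rest) (bp2 t u a : R →₀ k)
        + md (fun z => R.node a z rest) (bp2 t u b)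
        + md (fun l => R.node a b l) (bp2L t u rest)
        + ((graftings u a).map fun x =>
            ((graftings t b).map fun z => Finsupp.single (R.node x z rest) (1 : k)).sum).sum
        + ((graftings u a).map fun x =>
            ((graftingsL t rest).map fun l => Finsupp.single (R.node x b l) (1 : k)).sum).sum
        + ((graftings u b).map fun z =>
            ((graftings t a).map fun x => Finsupp.single (R.node x z rest) (1 : k)).sum).sum
        + ((graftings u b).map fun z =>
            ((graftingsL t rest).map fun l => Finsupp.single (R.node a z l) (1 : k)).sum).sum
        + ((graftingsL u rest).map fun l =>
            ((graftings t a).map fun x => Finsupp.single (R.node x b l) (1 : k)).sum).sum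
        + ((graftingsL u rest).map fun l =>
            ((graftings t b).map fun z => Finsupp.single (R.node a z l) (1 : k)).sum).sum := by
  simp only [bp2, bp2L, graftings, List.map_append, List.sum_append, List.map_map,
    Function.comp_def, bp_node, md_bp, md_bpL, md_listSum, listSum_add]
  abel

lemma bp2L_cons (t u w : R) (ws : List R) :
    bp2L t u (w :: ws)
      = md (fun y => y :: ws) (bp2 t u w : R →₀ k)
        + md (fun l => w :: l) (bp2L t u ws)
        + ((graftings u w).map fun x =>
            ((graftingsL t ws).map fun m => Finsupp.single (x :: m) (1 : k)).sum).sum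
        + ((graftingsL u ws).map fun l =>
            ((graftings t w).map fun x => Finsupp.single (x :: l) (1 : k)).sum).sum := by
  simp only [bp2L, bp2, graftingsL, List.map_append, List.sum_append, List.map_map,
    Function.comp_def, bpL_cons, md_bp, md_bpL, md_listSum, listSum_add]
  abel

mutual
theorem key (t u v : R) :
    bp2 t u v + bp1 u t v = (bp2 u t v + bp1 t u v : R →₀ k) := by
  match v with
  | .leaf =>
      rw [bp2_leaf, bp2_leaf, bp1_leaf, bp1_leaf]; exact add_comm _ _
  | .node a b rest =>
      have ha := key t u a
      have hb := key t u b
      have hr := keyL t u rest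
      have ea : bp2 t u a = (bp2 u t a + bp1 t u a - bp1 u t a : R →₀ k) := by
        rw [← ha]; abel
      have eb : bp2 t u b = (bp2 u t b + bp1 t u b - bp1 u t b : R →₀ k) := by
        rw [← hb]; abel
      have er : bp2L t u rest = (bp2L u t rest + bp1L t u rest - bp1L u t rest : List R →₀ k) := by
        rw [← hr]; abel
      have c1 :
          ((graftings u a).map fun x =>
              ((graftings t b).map fun z => Finsupp.single (R.node x z rest) (1 : k)).sum).sum
            = ((graftings t b).map fun z =>
              ((graftings u a).map fun x => Finsupp.single (R.node x z rest) (1 : k)).sum).sum :=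
        listSum_comm _ _ _
      have c2 :
          ((graftings u a).map fun x =>
              ((graftingsL t rest).map fun l => Finsupp.single (R.node x b l) (1 : k)).sum).sum
            = ((graftingsL t rest).map fun l =>
              ((graftings u a).map fun x => Finsupp.single (R.node x b l) (1 : k)).sum).sum :=
        listSum_comm _ _ _
      have c3 :
          ((graftings u b).map fun z =>
              ((graftings t a).map fun x => Finsupp.single (R.node x z rest) (1 : k)).sum).sum
            = ((graftings t a).map fun x =>
              ((graftings u b).map fun z => Finsupp.single (R.node x z rest) (1 : k)).sum).sum :=
        listSum_comm _ _ _
      have c4 :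
          ((graftings u b).map fun z =>
              ((graftingsL t rest).map fun l => Finsupp.single (R.node a z l) (1 : k)).sum).sum
            = ((graftingsL t rest).map fun l =>
              ((graftings u b).map fun z => Finsupp.single (R.node a z l) (1 : k)).sum).sum :=
        listSum_comm _ _ _
      have c5 :
          ((graftingsL u rest).map fun l =>
              ((graftings t a).map fun x => Finsupp.single (R.node x b l) (1 : k)).sum).sum
            = ((graftings t a).map fun x =>
              ((graftingsL u rest).map fun l => Finsupp.single (R.node x b l) (1 : k)).sum).sum :=
        listSum_comm _ _ _
      have c6 :
          ((graftingsL u rest).map fun l =>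
              ((graftings t b).map fun z => Finsupp.single (R.node a z l) (1 : k)).sum).sum
            = ((graftings t b).map fun z =>
              ((graftingsL u rest).map fun l => Finsupp.single (R.node a z l) (1 : k)).sum).sum :=
        listSum_comm _ _ _
      rw [bp2_node t u a b rest, bp2_node u t a b rest,
        bp1_node u t a b rest, bp1_node t u a b rest, ea, eb, er,
        c1, c2, c3, c4, c5, c6]
      simp only [map_add, map_sub]
      abel
termination_by sizeOf v

theorem keyL (t u : R) (us : List R) :
    bp2L t u us + bp1L u t us = (bp2L u t us + bp1L t u us : List R →₀ k) := by
  match us with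
  | [] => rw [bp2L_nil, bp2L_nil, bp1L_nil, bp1L_nil]
  | w :: ws =>
      have hw := key t u w
      have hws := keyL t u ws
      have ew : bp2 t u w = (bp2 u t w + bp1 t u w - bp1 u t w : R →₀ k) := by
        rw [← hw]; abel
      have ews : bp2L t u ws = (bp2L u t ws + bp1L t u ws - bp1L u t ws : List R →₀ k) := by
        rw [← hws]; abel
      have c1 :
          ((graftings u w).map fun x =>
              ((graftingsL t ws).map fun m => Finsupp.single (x :: m) (1 : k)).sum).sum
            = ((graftingsL t ws).map fun m =>
              ((graftings u w).map fun x => Finsupp.single (x :: m) (1 : k)).sum).sum :=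
        listSum_comm _ _ _
      have c2 :
          ((graftingsL u ws).map fun l =>
              ((graftings t w).map fun x => Finsupp.single (x :: l) (1 : k)).sum).sum
            = ((graftings t w).map fun x =>
              ((graftingsL u ws).map fun l => Finsupp.single (x :: l) (1 : k)).sum).sum :=
        listSum_comm _ _ _
      rw [bp2L_cons t u w ws, bp2L_cons u t w ws, bp1L_cons u t w ws, bp1L_cons t u w ws,
        ew, ews, c1, c2]
      simp only [map_add, map_sub]
      abel
termination_by sizeOf us
end

/- bridging to graftMul -/
lemma graftMul_single_single (t u : R) (a b : k) :
    graftMul (Finsupp.single t a) (Finsupp.single u b) = (a * b) • bp t u := by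
  unfold graftMul
  rw [Finsupp.sum_single_index (by simp), Finsupp.sum_single_index (by simp)]

lemma graftMul_zero_right (x : R →₀ k) : graftMul x 0 = 0 := by
  simp [graftMul]

lemma graftMul_zero_left (y : R →₀ k) : graftMul 0 y = 0 := by
  simp [graftMul]

lemma graftMul_add_right (x y z : R →₀ k) :
    graftMul x (y + z) = graftMul x y + graftMul x z := by
  unfold graftMul
  rw [← Finsupp.sum_add]
  refine Finsupp.sum_congr fun t _ => ?_
  rw [Finsupp.sum_add_index' (fun u => by simp) (fun u b1 b2 => by rw [mul_add, add_smul])]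

lemma graftMul_add_left (x y z : R →₀ k) :
    graftMul (x + y) z = graftMul x z + graftMul y z := by
  unfold graftMul
  rw [Finsupp.sum_add_index' (fun t => by simp) (fun t a1 a2 => ?_)]
  rw [← Finsupp.sum_add]
  exact Finsupp.sum_congr fun u _ => by rw [add_mul, add_smul]

lemma graftMul_sub_left (x y z : R →₀ k) :
    graftMul (x - y) z = graftMul x z - graftMul y z :=
  eq_sub_of_add_eq (by rw [← graftMul_add_left, sub_add_cancel])

lemma graftMul_sub_right (x y z : R →₀ k) :
    graftMul x (y - z) = graftMul x y - graftMul x z :=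
  eq_sub_of_add_eq (by rw [← graftMul_add_right, sub_add_cancel])

lemma graftMul_listSum_right {α : Type*} (x : R →₀ k) (l : List α) (g : α → R →₀ k) :
    graftMul x ((l.map g).sum) = (l.map fun w => graftMul x (g w)).sum := by
  induction l with
  | nil => simp [graftMul_zero_right]
  | cons a l ih => simp [graftMul_add_right, ih]

lemma graftMul_listSum_left {α : Type*} (y : R →₀ k) (l : List α) (g : α → R →₀ k) :
    graftMul ((l.map g).sum) y = (l.map fun w => graftMul (g w) y).sum := by
  induction l with
  | nil => simp [graftMul_zero_left]
  | cons a l ih => simp [graftMul_add_left, ih]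

lemma gm_e_e (t u : R) : graftMul (e t) (e u) = (bp t u : R →₀ k) := by
  simp [e, graftMul_single_single]

lemma gm_e_bp (t u v : R) : graftMul (e t) (bp u v) = (bp2 t u v : R →₀ k) := by
  rw [bp, bp2, graftMul_listSum_right]
  simp [e, graftMul_single_single]

lemma gm_bp_e (t u v : R) : graftMul (bp t u) (e v) = (bp1 t u v : R →₀ k) := by
  rw [bp, bp1, graftMul_listSum_left]
  simp [e, graftMul_single_single]

lemma bracket_e_e (t u : R) : bracket (e t) (e u) = (bp t u - bp u t : R →₀ k) := by
  simp [bracket, gm_e_e]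

end RJaux

open RJaux

/-- the bracket `[t,u] := t ↷σ u − u ↷σ t` satisfies the Jacobi identity
on the linear span of reduced planar trees. -/
theorem bracket_jacobi (t u v : R) :
    bracket (bracket (e t) (e u)) (e v) + bracket (bracket (e v) (e t)) (e u)
      + bracket (bracket (e u) (e v)) (e t) = (0 : R →₀ k) := by
  have expand : ∀ x y z : R, bracket (bracket (e x) (e y)) (e z)
      = (bp1 x y z - bp1 y x z - bp2 z x y + bp2 z y x : R →₀ k) := by
    intro x y z
    rw [bracket, bracket_e_e, graftMul_sub_left, graftMul_sub_right,
      gm_bp_e, gm_bp_e, gm_e_bp, gm_e_bp]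
    abel
  rw [expand, expand, expand]
  have h1 : (bp1 t u v : R →₀ k) = bp2 t u v + bp1 u t v - bp2 u t v := by
    rw [key t u v]; abel
  have h2 : (bp1 v t u : R →₀ k) = bp2 v t u + bp1 t v u - bp2 t v u := by
    rw [key v t u]; abel
  have h3 : (bp1 u v t : R →₀ k) = bp2 u v t + bp1 v u t - bp2 v u t := by
    rw [key u v t]; abel
  rw [h1, h2, h3]
  abel
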